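/- Let l ≥ 1, let n₁, …, n_l be positive integers and a₁, …, a_l ∈ {1, −1}. Then in ℚ⟦t⟧, exp(∑_{m≥1} (1/m) (∏_{i=1}^{l} (1 + (−1)^{n_i} a_i^m)) t^m) = (1 − t)^α (1 + t)^β, where α = −1 + ∑_{S} (−1)^{(∑_{i∈S} n_i) − 1} with the sum over nonempty S ⊆ {1,…,l} with ∏_{i∈S} a_i = 1, and β = ∑_{S} (−1)^{(∑_{i∈S} n_i) − 1} with the sum over nonempty S ⊆ {1,…,l} with ∏_{i∈S} a_i = −1 (negative exponents denote inverses of the corresponding units of ℚ⟦t⟧). -/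

import Mathlib

/-!
Write `g = ∑ L(m) tᵐ / m`. Expanding the product over subsets `S`, with `n_S = ∑_{i ∈ S} nᵢ ≥ 1`
and `a_S = ±1`, gives `L(m) = 1 - A - B (-1)ᵐ`, where `A` and `B` are the sums in the exponents.
Hence `g' = (1 - A)/(1 - t) - B/(1 + t)`, which is also the logarithmic derivative of
`(1 - t)^α (1 + t)^β`. So `exp g` and `(1 - t)^α (1 + t)^β` both solve `f' = g' f` with `f(0) = 1`,
and the quotient of two such solutions has derivative zero, so it is `1`.
-/

open PowerSeries Finset

/-- Formal exponential of a power series (the genuine exponential composition when the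
constant coefficient of `g` is zero). -/
noncomputable def psExp (g : PowerSeries ℚ) : PowerSeries ℚ :=
  PowerSeries.mk fun n =>
    PowerSeries.coeff (R := ℚ) n (∑ k ∈ Finset.range (n + 1), (k.factorial : ℚ)⁻¹ • g ^ k)

/-- Integer power of a power series: for a negative exponent we take the corresponding
power of the formal inverse (which is the genuine inverse when `f` is a unit). -/
noncomputable def psZpow (f : PowerSeries ℚ) (k : ℤ) : PowerSeries ℚ :=
  if 0 ≤ k then f ^ k.toNat else f⁻¹ ^ (-k).toNat

theorem Derivation.leibniz_val_zpow {R A : Type*} [CommRing R] [CommRing A] [Algebra R A]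
    (D : Derivation R A A) (u : Aˣ) (n : ℤ) :
    D ↑(u ^ n) = (n * (↑u⁻¹ * D ↑u)) * ↑(u ^ n) := by
  induction n using Int.induction_on with
  | zero => simp
  | succ n ih =>
    rw [zpow_add_one, Units.val_mul, D.leibniz, smul_eq_mul, smul_eq_mul, ih]
    push_cast
    linear_combination -(D ↑u * ↑(u ^ (n : ℤ))) * u.inv_mul
  | pred n ih =>
    have hinv : D ↑u⁻¹ = -(↑u⁻¹ : A) ^ 2 • D ↑u := D.leibniz_of_mul_eq_one u.inv_mul
    rw [zpow_sub_one, Units.val_mul, D.leibniz, smul_eq_mul, smul_eq_mul, ih, hinv, smul_eq_mul]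
    push_cast
    ring

namespace PowerSeries

variable {R : Type*} [CommRing R]

theorem coeff_pow_eq_zero_of_lt {g : R⟦X⟧} (hg : constantCoeff g = 0) {m k : ℕ} (h : m < k) :
    coeff m (g ^ k) = 0 :=
  X_pow_dvd_iff.mp (pow_dvd_pow_of_dvd (X_dvd_iff.mpr hg) k) m h

theorem derivative_mk_div {K : Type*} [Field K] [CharZero K] (c : ℕ → K) :
    d⁄dX K (mk fun m => if m = 0 then 0 else c m / m) = mk fun n => c (n + 1) := by
  ext n
  rw [coeff_derivative, coeff_mk, coeff_mk, if_neg n.succ_ne_zero]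
  push_cast
  field_simp

theorem mk_pow_mul_one_sub_C_mul_X (a : R) : (mk fun n => a ^ n) * (1 - C a * X) = 1 := by
  simpa [rescale_mk, rescale_X] using congrArg (rescale a) (mk_one_mul_one_sub_eq_one R)

noncomputable def oneSubCMulX (a : R) : R⟦X⟧ˣ :=
  Units.mkOfMulEqOne (1 - C a * X) (mk fun n => a ^ n)
    (by rw [mul_comm]; exact mk_pow_mul_one_sub_C_mul_X a)

theorem val_oneSubCMulX (a : R) : (↑(oneSubCMulX a) : R⟦X⟧) = 1 - C a * X := rfl

theorem val_inv_oneSubCMulX (a : R) : (↑(oneSubCMulX a)⁻¹ : R⟦X⟧) = mk fun n => a ^ n := rfl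

theorem derivative_oneSubCMulX_zpow (a : R) (k : ℤ) :
    d⁄dX R ↑(oneSubCMulX a ^ k) = (mk fun n => -(k * a ^ (n + 1))) * ↑(oneSubCMulX a ^ k) := by
  have hd : d⁄dX R ↑(oneSubCMulX a) = -C a := by simp [oneSubCMulX]
  rw [(d⁄dX R).leibniz_val_zpow, hd, val_inv_oneSubCMulX]
  congr 1
  ext n
  rw [← map_intCast (C (R := R)) k, mul_neg, mul_neg, map_neg, coeff_C_mul, coeff_mul_C, coeff_mk,
    coeff_mk, pow_succ]

theorem constantCoeff_oneSubCMulX_zpow (a : R) (k : ℤ) :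
    constantCoeff (↑(oneSubCMulX a ^ k) : R⟦X⟧) = 1 := by
  have h : Units.map (constantCoeff (R := R)).toMonoidHom (oneSubCMulX a) = 1 :=
    Units.ext (by simp [oneSubCMulX])
  have := congrArg Units.val
    (map_zpow (Units.map (constantCoeff (R := R)).toMonoidHom) (oneSubCMulX a) k)
  rwa [h, one_zpow, Units.coe_map] at this

theorem eq_val_of_derivative_eq_mul [IsAddTorsionFree R] {f h : R⟦X⟧} {u : R⟦X⟧ˣ}
    (hc : constantCoeff f = constantCoeff (u : R⟦X⟧))
    (hf : d⁄dX R f = h * f) (hu : d⁄dX R u = h * u) : f = u := by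
  suffices f * ↑u⁻¹ = 1 by simpa using congrArg (· * (u : R⟦X⟧)) this
  apply derivative.ext
  · rw [(d⁄dX R).leibniz, derivative_inv, hf, hu, derivative_one, smul_eq_mul, smul_eq_mul]
    linear_combination -(h * f * ↑u⁻¹) * u.inv_mul
  · rw [map_mul, hc, ← map_mul, u.mul_inv, map_one]

end PowerSeries

theorem psExp_eq_subst_exp {g : ℚ⟦X⟧} (hg : constantCoeff g = 0) :
    psExp g = (exp ℚ).subst g := by
  ext n
  rw [coeff_subst' (HasSubst.of_constantCoeff_zero' hg),
    finsum_eq_sum_of_support_subset (s := range (n + 1))]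
  · simp [psExp, coeff_exp, map_sum]
  · intro k hk
    by_contra h
    simp only [coe_range, Set.mem_Iio, not_lt] at h
    exact hk (by simp [coeff_pow_eq_zero_of_lt hg (show n < k by omega)])

theorem derivative_psExp {g : ℚ⟦X⟧} (hg : constantCoeff g = 0) :
    d⁄dX ℚ (psExp g) = d⁄dX ℚ g * psExp g := by
  rw [psExp_eq_subst_exp hg, derivative_subst (HasSubst.of_constantCoeff_zero' hg),
    derivative_exp, mul_comm]

theorem constantCoeff_psExp (g : ℚ⟦X⟧) : constantCoeff (psExp g) = 1 := by
  rw [← coeff_zero_eq_constantCoeff_apply]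
  simp [psExp]

theorem psZpow_val (u : ℚ⟦X⟧ˣ) (k : ℤ) : psZpow u k = ↑(u ^ k) := by
  have hinv : (u : ℚ⟦X⟧)⁻¹ = ↑u⁻¹ :=
    (inv_eq_iff_mul_eq_one (isUnit_iff_constantCoeff.mp u.isUnit).ne_zero).mpr u.inv_mul
  obtain ⟨k, rfl | rfl⟩ := Int.eq_nat_or_neg k
  · simp [psZpow]
  · rcases k.eq_zero_or_pos with rfl | hk
    · simp [psZpow]
    · simp [psZpow, hinv, hk.ne']

theorem Finset.sum_mul_pow_of_eq_one_or_eq_neg_one {β R : Type*} [CommRing R] {s : Finset β}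
    {p : β → ℤ} (hp : ∀ x ∈ s, p x = 1 ∨ p x = -1) (w : β → R) (m : ℕ) :
    ∑ x ∈ s, w x * (p x : R) ^ m =
      ∑ x ∈ s.filter (p · = 1), w x + (∑ x ∈ s.filter (p · = -1), w x) * (-1) ^ m := by
  have hfilter : s.filter (¬p · = 1) = s.filter (p · = -1) :=
    filter_congr fun x hx => by rcases hp x hx with h | h <;> simp [h]
  rw [← sum_filter_add_sum_filter_not s (p · = 1), hfilter, sum_mul]
  congr 1 <;> refine sum_congr rfl fun x hx => ?_ <;> simp [(mem_filter.mp hx).2]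

section Lefschetz

variable {ι : Type*} [Fintype ι] [DecidableEq ι]

-- `α = -1 + lefschetzExponent n a 1` and `β = lefschetzExponent n a (-1)`.
def lefschetzExponent (n : ι → ℕ) (a : ι → ℤ) (ε : ℤ) : ℤ :=
  ∑ S ∈ (univ.powerset.erase ∅).filter (fun S => ∏ i ∈ S, a i = ε), (-1) ^ ((∑ i ∈ S, n i) - 1)

theorem prod_one_add_neg_one_pow_mul_pow {n : ι → ℕ} {a : ι → ℤ} (hn : ∀ i, 0 < n i)
    (ha : ∀ i, a i = 1 ∨ a i = -1) (m : ℕ) :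
    ∏ i, (1 + (-1) ^ n i * (a i : ℚ) ^ m) =
      1 - lefschetzExponent n a 1 - lefschetzExponent n a (-1) * (-1) ^ m := by
  set S₀ := (univ : Finset ι).powerset.erase ∅
  have hsign : ∀ S ∈ S₀, ∏ i ∈ S, a i = 1 ∨ ∏ i ∈ S, a i = -1 := fun S _ =>
    Int.isUnit_iff.mp (IsUnit.prod_iff.mpr fun i _ => Int.isUnit_iff.mpr (ha i))
  have hterm : ∀ S ∈ S₀, ∏ i ∈ S, ((-1) ^ n i * (a i : ℚ) ^ m) =
      -(-1) ^ ((∑ i ∈ S, n i) - 1) * ((∏ i ∈ S, a i : ℤ) : ℚ) ^ m := by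
    intro S hS
    obtain ⟨N, hN⟩ : ∃ N, ∑ i ∈ S, n i = N + 1 := Nat.exists_eq_add_one.mpr
      (sum_pos (fun i _ => hn i) (nonempty_of_ne_empty (ne_of_mem_erase hS)))
    rw [prod_mul_distrib, prod_pow_eq_pow_sum, Int.cast_prod, prod_pow, hN, pow_succ,
      Nat.add_sub_cancel]
    ring
  rw [prod_one_add, ← add_sum_erase _ _ (empty_mem_powerset _), prod_empty, sum_congr rfl hterm,
    sum_mul_pow_of_eq_one_or_eq_neg_one hsign]
  simp only [lefschetzExponent, Int.cast_sum, Int.cast_pow, Int.cast_neg, Int.cast_one,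
    sum_neg_distrib]
  ring

end Lefschetz

theorem lefschetz_zeta_quasiUnipotent_general
    (l : ℕ) (n : Fin l → ℕ) (hn : ∀ i, 0 < n i) (a : Fin l → ℤ)
    (ha : ∀ i, a i = 1 ∨ a i = -1) :
    psExp (PowerSeries.mk fun m =>
        if m = 0 then 0 else (∏ i, (1 + (-1) ^ n i * (a i : ℚ) ^ m)) / m) =
      psZpow (1 - PowerSeries.X)
          (-1 + ∑ S ∈ ((Finset.univ : Finset (Fin l)).powerset.erase ∅).filter
              (fun S => ∏ i ∈ S, a i = 1), (-1 : ℤ) ^ ((∑ i ∈ S, n i) - 1)) *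
        psZpow (1 + PowerSeries.X)
          (∑ S ∈ ((Finset.univ : Finset (Fin l)).powerset.erase ∅).filter
              (fun S => ∏ i ∈ S, a i = -1), (-1 : ℤ) ^ ((∑ i ∈ S, n i) - 1)) := by
  set α := -1 + lefschetzExponent n a 1
  set β := lefschetzExponent n a (-1)
  set g : ℚ⟦X⟧ := mk fun m => if m = 0 then 0 else (∏ i, (1 + (-1) ^ n i * (a i : ℚ) ^ m)) / m
  have hg : constantCoeff g = 0 := by
    rw [← coeff_zero_eq_constantCoeff_apply]
    simp [g]
  have hdg : d⁄dX ℚ g =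
      (mk fun k => -((α : ℚ) * 1 ^ (k + 1))) + mk fun k => -((β : ℚ) * (-1) ^ (k + 1)) := by
    rw [derivative_mk_div]
    ext k
    simp only [coeff_mk, map_add, prod_one_add_neg_one_pow_mul_pow hn ha, α, β]
    push_cast
    ring
  have h1 : (1 - X : ℚ⟦X⟧) = ↑(oneSubCMulX (1 : ℚ)) := by simp [val_oneSubCMulX]
  have h2 : (1 + X : ℚ⟦X⟧) = ↑(oneSubCMulX (-1 : ℚ)) := by simp [val_oneSubCMulX]
  change psExp g = psZpow _ α * psZpow _ β
  rw [h1, h2, psZpow_val, psZpow_val, ← Units.val_mul]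
  refine eq_val_of_derivative_eq_mul ?_ (derivative_psExp hg) ?_
  · simp [constantCoeff_psExp, constantCoeff_oneSubCMulX_zpow]
  · rw [Units.val_mul, (d⁄dX ℚ).leibniz, derivative_oneSubCMulX_zpow,
      derivative_oneSubCMulX_zpow, smul_eq_mul, smul_eq_mul, hdg]
    ring

/-- The Lefschetz zeta function of a quasi-unipotent map on a product of spheres
(basic eigenvalues `aᵢ = ±1`) is `(1-t)^α (1+t)^β`, where
`α = -1 + ∑_{S : ∏_{i∈S} aᵢ = 1} (-1)^{(∑_{i∈S} nᵢ) - 1}` and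
`β = ∑_{S : ∏_{i∈S} aᵢ = -1} (-1)^{(∑_{i∈S} nᵢ) - 1}`, the sums running over nonempty
subsets `S ⊆ {1,…,l}`. -/
theorem lefschetz_zeta_quasiUnipotent
    (l : ℕ) (hl : 1 ≤ l) (n : Fin l → ℕ) (hn : ∀ i, 0 < n i) (a : Fin l → ℤ)
    (ha : ∀ i, a i = 1 ∨ a i = -1) :
    psExp (PowerSeries.mk fun m =>
        if m = 0 then 0 else (∏ i, (1 + (-1) ^ n i * (a i : ℚ) ^ m)) / m) =
      psZpow (1 - PowerSeries.X)
          (-1 + ∑ S ∈ ((Finset.univ : Finset (Fin l)).powerset.erase ∅).filter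
              (fun S => ∏ i ∈ S, a i = 1), (-1 : ℤ) ^ ((∑ i ∈ S, n i) - 1)) *
        psZpow (1 + PowerSeries.X)
          (∑ S ∈ ((Finset.univ : Finset (Fin l)).powerset.erase ∅).filter
              (fun S => ∏ i ∈ S, a i = -1), (-1 : ℤ) ^ ((∑ i ∈ S, n i) - 1)) :=
  lefschetz_zeta_quasiUnipotent_general l n hn a ha
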